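/- Let R be a commutative ring whose zero-divisor graph Γ(R) has girth 4. Then γ_t(Γ(R)) = γ(Γ(R)) = 2. -/

import Mathlib

/-!
Girth 4 makes Γ(R) triangle-free, while every vertex misses some edge of a 4-cycle. Hence no
nonzero `x` annihilates all other vertices, so a dominating set has at least two elements.

For a dominating pair: if `R` is reduced, any edge `pq` works, since a vertex `v` missed by `p`
and `q`, with a neighbour `w`, would give the triangle `pv, w, qv`. Otherwise fix `n ≠ 0` with
`n² = 0`. The ideal `nR` squares to zero, so its nonzero elements form a clique; this forces
`nR ⊆ {0, n, -n}`, and then `-n = n`, since otherwise `±n` would be the only vertices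
annihilating `n` and an edge avoiding `n` would have both ends equal to `-n`. So `n` is the
only nonzero square-zero element, and `n` together with a neighbour `w₀` of a vertex `v₀` with
`v₀ n ≠ 0` dominates.
-/

/-- Vertices of the zero-divisor graph: nonzero zero-divisors. -/
def zdVerts (R : Type*) [CommRing R] : Set R :=
  {x | x ≠ 0 ∧ ∃ y ≠ 0, x * y = 0}

/-- The set of all zero-divisors (including 0 when R is nontrivial). -/
def zdSet (R : Type*) [CommRing R] : Set R :=
  {x | ∃ y ≠ 0, x * y = 0}

/-- A dominating set of the zero-divisor graph Γ(R) (loops allowed: `x` is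
adjacent to itself iff `x^2 = 0`). -/
def IsDomSet (R : Type*) [CommRing R] (X : Set R) : Prop :=
  X ⊆ zdVerts R ∧ ∀ v ∈ zdVerts R, v ∉ X → ∃ x ∈ X, x * v = 0

/-- A total dominating set of Γ(R): every vertex has a neighbor in `X`
(possibly itself, if looped). -/
def IsTotDomSet (R : Type*) [CommRing R] (X : Set R) : Prop :=
  X ⊆ zdVerts R ∧ ∀ v ∈ zdVerts R, ∃ x ∈ X, x * v = 0

/-- The domination number γ(Γ(R)), as a cardinal. -/
noncomputable def domNum (R : Type*) [CommRing R] : Cardinal :=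
  ⨅ X : {X : Set R // IsDomSet R X}, Cardinal.mk X.1

/-- The total domination number γ_t(Γ(R)), as a cardinal. -/
noncomputable def totDomNum (R : Type*) [CommRing R] : Cardinal :=
  ⨅ X : {X : Set R // IsTotDomSet R X}, Cardinal.mk X.1

/-- The zero-divisor graph as a simple graph (loops discarded), used for girth. -/
def zdGraph (R : Type*) [CommRing R] : SimpleGraph R where
  Adj r s := r ≠ s ∧ r ≠ 0 ∧ s ≠ 0 ∧ r * s = 0
  symm := by constructor; intro r s h; exact ⟨h.1.symm, h.2.2.1, h.2.1, by rw [mul_comm]; exact h.2.2.2⟩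
  loopless := by constructor; intro r h; exact h.1 rfl

namespace SimpleGraph

variable {V : Type*} {G : SimpleGraph V}

lemma cliqueFree_three_of_three_lt_egirth (h : 3 < G.egirth) : G.CliqueFree 3 := by
  intro s hs
  obtain ⟨u, w, hw, hlen⟩ := is3Clique_iff_exists_cycle_length_three.1 ⟨s, hs⟩
  have := (egirth_le_length hw).trans_lt' h
  simp [hlen] at this

lemma exists_adj_ne_ne_of_egirth_eq_four (h : G.egirth = 4) (x : V) :
    ∃ a b, G.Adj a b ∧ a ≠ x ∧ b ≠ x := by
  obtain ⟨u, w, hw, hlen⟩ :=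
    (exists_egirth_eq_length (G := G)).2 (by simp [← egirth_eq_top, h])
  have hw4 : w.length = 4 := by exact_mod_cast (h.symm.trans hlen).symm
  rcases w with _ | @⟨_, b, _, hub, _ | @⟨_, c, _, _, _ | @⟨_, d, _, hcd, _ |
    ⟨_, _ | ⟨_, _⟩⟩⟩⟩⟩ <;> simp at hw4
  have hnodup := hw.support_nodup
  simp only [Walk.support_cons, Walk.support_nil, List.tail_cons, List.nodup_cons,
    List.mem_cons, List.not_mem_nil, or_false, List.nodup_nil, and_true, not_or] at hnodup
  by_cases hx : u ≠ x ∧ b ≠ x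
  · exact ⟨u, b, hub, hx⟩
  · exact ⟨c, d, hcd, by grind, by grind⟩

end SimpleGraph

namespace Cardinal

lemma iInf_mk_eq {α : Type*} {P : Set α → Prop} {s : Set α} {c : Cardinal}
    (hs : P s) (hsc : #s = c) (hle : ∀ t, P t → c ≤ #t) : ⨅ t : {t // P t}, #t.1 = c :=
  have : Nonempty {t // P t} := ⟨⟨s, hs⟩⟩
  le_antisymm (hsc ▸ ciInf_le' (fun t : {t // P t} => #t.1) ⟨s, hs⟩)
    (le_ciInf fun t => hle t.1 t.2)

end Cardinal

section ZeroDivisorGraph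

open Cardinal

variable {R : Type*} [CommRing R]

lemma isTotDomSet_pair {p q : R} (hp : p ∈ zdVerts R) (hq : q ∈ zdVerts R)
    (hcover : ∀ v ∈ zdVerts R, p * v = 0 ∨ q * v = 0) : IsTotDomSet R {p, q} := by
  refine ⟨Set.insert_subset hp (Set.singleton_subset_iff.2 hq), fun v hv => ?_⟩
  rcases hcover v hv with h | h
  · exact ⟨p, Set.mem_insert p _, h⟩
  · exact ⟨q, Set.mem_insert_of_mem p rfl, h⟩

lemma IsTotDomSet.isDomSet {X : Set R} (hX : IsTotDomSet R X) : IsDomSet R X :=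
  ⟨hX.1, fun v hv _ => hX.2 v hv⟩

variable (hG : (zdGraph R).CliqueFree 3)
include hG

lemma zdGraph_not_triangle {x y z : R}
    (hxy : x ≠ y) (hxz : x ≠ z) (hyz : y ≠ z) (hx : x ≠ 0) (hy : y ≠ 0) (hz : z ≠ 0)
    (hxy0 : x * y = 0) (hxz0 : x * z = 0) (hyz0 : y * z = 0) : False := by
  classical
  exact hG {x, y, z} <| SimpleGraph.is3Clique_triple_iff.2
    ⟨⟨hxy, hx, hy, hxy0⟩, ⟨hxz, hx, hz, hxz0⟩, ⟨hyz, hy, hz, hyz0⟩⟩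

lemma isTotDomSet_pair_of_reduced (hred : ∀ m : R, m * m = 0 → m = 0) {p q : R}
    (hpq : (zdGraph R).Adj p q) : IsTotDomSet R {p, q} := by
  refine isTotDomSet_pair ⟨hpq.2.1, q, hpq.2.2.1, hpq.2.2.2⟩
    ⟨hpq.2.2.1, p, hpq.2.1, by rw [mul_comm, hpq.2.2.2]⟩ ?_
  rintro v ⟨-, w, hw, hvw⟩
  by_contra! ⟨hpv, hqv⟩
  refine zdGraph_not_triangle hG ?_ ?_ ?_ hpv hw hqv (by linear_combination p * hvw)
    (by linear_combination v * v * hpq.2.2.2) (by linear_combination q * hvw)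
  · exact fun h => hpv (hred _ (by linear_combination (p * v) * h + p * hvw))
  · exact fun h => hpv (hred _ (by linear_combination (p * v) * h + v * v * hpq.2.2.2))
  · exact fun h => hqv (hred _ (by linear_combination q * hvw - (q * v) * h))

section SquareZero

variable {n : R} (hn0 : n ≠ 0) (hn : n * n = 0)
include hn0 hn

lemma mul_eq_zero_or_eq_or_eq_neg (r : R) : r * n = 0 ∨ r * n = n ∨ r * n = -n := by
  by_contra! ⟨h0, hn', hneg⟩
  refine zdGraph_not_triangle hG (z := r * n + n) hn' ?_ ?_ h0 hn0 ?_
    (by linear_combination r * hn) (by linear_combination (r * r + r) * hn)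
    (by linear_combination (r + 1) * hn)
  · exact fun h => hn0 (by linear_combination -h)
  · exact fun h => h0 (by linear_combination -h)
  · exact fun h => hneg (by linear_combination h)

lemma eq_neg_of_mul_eq_zero (hneg : -n ≠ n) {v : R} (hv0 : v ≠ 0) (hvn : v ≠ n)
    (hv : v * n = 0) : v = -n := by
  by_contra hv'
  exact zdGraph_not_triangle hG hvn hv' hneg.symm hv0 hn0 (neg_ne_zero.2 hn0) hv
    (by linear_combination -hv) (by linear_combination -hn)

end SquareZero

variable (hE : ∀ x : R, ∃ a b, (zdGraph R).Adj a b ∧ a ≠ x ∧ b ≠ x)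
include hE

lemma exists_mem_zdVerts_mul_ne_zero {x : R} (hx : x ≠ 0) :
    ∃ v ∈ zdVerts R, v ≠ x ∧ x * v ≠ 0 := by
  obtain ⟨a, b, hab, hax, hbx⟩ := hE x
  by_contra! hall
  exact zdGraph_not_triangle hG hax.symm hbx.symm hab.1 hx hab.2.1 hab.2.2.1
    (hall a ⟨hab.2.1, b, hab.2.2.1, hab.2.2.2⟩ hax)
    (hall b ⟨hab.2.2.1, a, hab.2.1, by rw [mul_comm, hab.2.2.2]⟩ hbx) hab.2.2.2

lemma two_le_mk_of_isDomSet {X : Set R} (hX : IsDomSet R X) : 2 ≤ #X := by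
  obtain ⟨a, b, hab, -, -⟩ := hE 0
  obtain ⟨x, hxX⟩ : X.Nonempty := by
    by_cases ha : a ∈ X
    · exact ⟨a, ha⟩
    · obtain ⟨x, hx, -⟩ := hX.2 a ⟨hab.2.1, b, hab.2.2.1, hab.2.2.2⟩ ha
      exact ⟨x, hx⟩
  obtain ⟨v, hv, hvx, hxv⟩ := exists_mem_zdVerts_mul_ne_zero hG hE (hX.1 hxX).1
  rw [two_le_iff' (⟨x, hxX⟩ : X)]
  by_cases hvX : v ∈ X
  · exact ⟨⟨v, hvX⟩, fun h => hvx (congrArg Subtype.val h)⟩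
  · obtain ⟨y, hyX, hyv⟩ := hX.2 v hv hvX
    exact ⟨⟨y, hyX⟩, fun h => hxv (Subtype.mk.inj h ▸ hyv)⟩

section SquareZero

variable {n : R} (hn0 : n ≠ 0) (hn : n * n = 0)
include hn0 hn

lemma neg_eq_self_of_mul_self_eq_zero : -n = n := by
  by_contra hneg
  have hedge : ∀ x y, (zdGraph R).Adj x y → x ≠ n → y ≠ n → x * n = 0 → False := by
    intro x y hxy hxn hyn hx
    have hx' : x = -n := eq_neg_of_mul_eq_zero hG hn0 hn hneg hxy.2.1 hxn hx
    have hy' : y = -n := eq_neg_of_mul_eq_zero hG hn0 hn hneg hxy.2.2.1 hyn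
      (by linear_combination y * hx' - hxy.2.2.2)
    exact hxy.1 (hx'.trans hy'.symm)
  obtain ⟨a, b, hab, ha, hb⟩ := hE n
  rcases mul_eq_zero_or_eq_or_eq_neg hG hn0 hn a with h | h | h
  · exact hedge a b hab ha hb h
  · exact hedge b a hab.symm hb ha (by linear_combination n * hab.2.2.2 - b * h)
  · exact hedge b a hab.symm hb ha (by linear_combination b * h - n * hab.2.2.2)

lemma mul_eq_zero_or_eq_self (r : R) : r * n = 0 ∨ r * n = n := by
  rcases mul_eq_zero_or_eq_or_eq_neg hG hn0 hn r with h | h | h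
  · exact .inl h
  · exact .inr h
  · exact .inr (h.trans (neg_eq_self_of_mul_self_eq_zero hG hE hn0 hn))

lemma eq_of_mul_self_eq_zero {m : R} (hm0 : m ≠ 0) (hm : m * m = 0) : m = n := by
  rcases mul_eq_zero_or_eq_self hG hE hn0 hn m with hmn | hmn
  · by_contra hne
    refine zdGraph_not_triangle hG (z := m + n) hne ?_ ?_ hm0 hn0 ?_ hmn
      (by linear_combination hm + hmn) (by linear_combination hmn + hn)
    · exact fun h => hn0 (by linear_combination -h)
    · exact fun h => hm0 (by linear_combination -h)
    · exact fun h => hne ((eq_neg_of_add_eq_zero_left h).trans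
        (neg_eq_self_of_mul_self_eq_zero hG hE hn0 hn))
  · rcases mul_eq_zero_or_eq_self hG hE hm0 hm n with hnm | hnm
    · exact absurd (by rw [← hmn, mul_comm, hnm]) hn0
    · rw [← hnm, mul_comm, hmn]

/-- A vertex `v` missed by `n` and `w₀`, with a neighbour `w`, gives the triangle `w, n, w₀ v`;
here `w₀ v ≠ n` because `v₀` annihilates `w₀ v` but not `n`. -/
lemma isTotDomSet_pair_of_mul_self_eq_zero {v₀ w₀ : R} (hv₀n : v₀ * n ≠ 0) (hw₀ : w₀ ≠ 0)
    (hv₀w₀ : v₀ * w₀ = 0) : IsTotDomSet R {n, w₀} := by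
  have hv₀n' : v₀ * n = n := (mul_eq_zero_or_eq_self hG hE hn0 hn v₀).resolve_left hv₀n
  have hw₀n : w₀ * n = 0 := by linear_combination n * hv₀w₀ - w₀ * hv₀n'
  have hv₀ : v₀ ≠ 0 := by rintro rfl; exact hv₀n (zero_mul n)
  refine isTotDomSet_pair ⟨hn0, n, hn0, hn⟩ ⟨hw₀, v₀, hv₀, by rw [mul_comm, hv₀w₀]⟩ ?_
  rintro v ⟨-, w, hw, hvw⟩
  by_contra! ⟨hnv, hw₀v⟩
  have hvn : v * n = n :=
    (mul_eq_zero_or_eq_self hG hE hn0 hn v).resolve_left (by rwa [mul_comm])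
  have hwn : w ≠ n := by rintro rfl; exact hnv (by rw [mul_comm, hvw])
  have hw₀vn : w₀ * v ≠ n := fun h => hv₀n (by linear_combination v * hv₀w₀ - v₀ * h)
  refine zdGraph_not_triangle hG hwn ?_ hw₀vn.symm hw hn0 hw₀v
    (by linear_combination n * hvw - w * hvn) (by linear_combination w₀ * hvw)
    (by linear_combination w₀ * hvn + hw₀n)
  rintro rfl
  exact hwn (eq_of_mul_self_eq_zero hG hE hn0 hn hw₀v (by linear_combination w₀ * hvw))

end SquareZero

lemma exists_isTotDomSet_pair : ∃ p q : R, p ≠ q ∧ IsTotDomSet R {p, q} := by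
  by_cases hred : ∀ m : R, m * m = 0 → m = 0
  · obtain ⟨p, q, hpq, -, -⟩ := hE 0
    exact ⟨p, q, hpq.1, isTotDomSet_pair_of_reduced hG hred hpq⟩
  · push Not at hred
    obtain ⟨n, hn, hn0⟩ := hred
    obtain ⟨v₀, ⟨-, w₀, hw₀, hv₀w₀⟩, -, hnv₀⟩ := exists_mem_zdVerts_mul_ne_zero hG hE hn0
    rw [mul_comm] at hnv₀
    refine ⟨n, w₀, ?_, isTotDomSet_pair_of_mul_self_eq_zero hG hE hn0 hn hnv₀ hw₀ hv₀w₀⟩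
    rintro rfl
    exact hnv₀ hv₀w₀

end ZeroDivisorGraph

theorem stmt_11 (R : Type*) [CommRing R] (h : (zdGraph R).egirth = 4) :
    totDomNum R = 2 ∧ domNum R = 2 := by
  have hG := SimpleGraph.cliqueFree_three_of_three_lt_egirth (by rw [h]; norm_num)
  have hE := SimpleGraph.exists_adj_ne_ne_of_egirth_eq_four h
  obtain ⟨p, q, hpq, hpq_tot⟩ := exists_isTotDomSet_pair hG hE
  have hcard : Cardinal.mk ({p, q} : Set R) = 2 := by
    rw [Cardinal.mk_insert (by simpa using hpq), Cardinal.mk_singleton, one_add_one_eq_two]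
  exact ⟨Cardinal.iInf_mk_eq hpq_tot hcard fun X hX => two_le_mk_of_isDomSet hG hE hX.isDomSet,
    Cardinal.iInf_mk_eq hpq_tot.isDomSet hcard fun X hX => two_le_mk_of_isDomSet hG hE hX⟩
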